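/- Let θ, ω : ℝ² → ℝ be smooth functions of (y,s) with cosh θ > 0 and sinh θ nowhere vanishing, and define q := (θ_y − i ω_y tanh θ) e^{-iω} and ρ := cosh θ. Then the pair of real equations θ_{ys} = sinh θ + (tanh θ) ω_y ω_s and (ω_s cosh θ)_y = (ω_y / cosh θ)_s holds identically if and only if q_s = sinh θ · e^{-iω} holds identically; and in that case (q, ρ) satisfies the defocusing complex coupled dispersionless system q_{ys} = ρ q and ρ_y − (1/2)(|q|²)_s = 0. -/

import Mathlib

noncomputable section

/-- Partial derivative with respect to the first variable (`y`). -/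
def pd1 {E : Type*} [NormedAddCommGroup E] [NormedSpace ℝ E] (F : ℝ → ℝ → E) (y s : ℝ) : E :=
  deriv (fun u => F u s) y

/-- Partial derivative with respect to the second variable (`s`). -/
def pd2 {E : Type*} [NormedAddCommGroup E] [NormedSpace ℝ E] (F : ℝ → ℝ → E) (y s : ℝ) : E :=
  deriv (fun v => F y v) s

/-- `q := (θ_y − i ω_y tanh θ) e^{-iω}`. -/
def qfun (θ ω : ℝ → ℝ → ℝ) (y s : ℝ) : ℂ :=
  (Complex.ofReal (pd1 θ y s)
      - Complex.I * Complex.ofReal (pd1 ω y s) * Complex.ofReal (Real.tanh (θ y s))) *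
    Complex.exp (-(Complex.I) * (ω y s : ℂ))

section aux
variable {E : Type*} [NormedAddCommGroup E] [NormedSpace ℝ E] {F : ℝ → ℝ → E}

theorem aux_hd1 (hF : ContDiff ℝ (⊤ : ℕ∞) (Function.uncurry F)) (y s : ℝ) :
    HasDerivAt (fun u => F u s) (pd1 F y s) y := by
  have h : DifferentiableAt ℝ (fun u => F u s) y :=
    ((hF.differentiable (by simp)).comp (differentiable_id.prodMk (differentiable_const s))) y
  exact h.hasDerivAt

theorem aux_hd2 (hF : ContDiff ℝ (⊤ : ℕ∞) (Function.uncurry F)) (y s : ℝ) :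
    HasDerivAt (fun v => F y v) (pd2 F y s) s := by
  have h : DifferentiableAt ℝ (fun v => F y v) s :=
    ((hF.differentiable (by simp)).comp ((differentiable_const y).prodMk differentiable_id)) s
  exact h.hasDerivAt

theorem pd1_eq_fderiv (hF : ContDiff ℝ (⊤ : ℕ∞) (Function.uncurry F)) (y s : ℝ) :
    pd1 F y s = fderiv ℝ (Function.uncurry F) (y, s) (1, 0) := by
  have h1 : HasFDerivAt (fun u : ℝ => (u, s))
      ((ContinuousLinearMap.id ℝ ℝ).prod 0) y :=
    (hasFDerivAt_id y).prodMk (hasFDerivAt_const s y)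
  have h2 := ((hF.differentiable (by simp) (y, s)).hasFDerivAt).comp y h1
  have h3 := h2.hasDerivAt.deriv
  simp at h3
  exact h3

theorem pd2_eq_fderiv (hF : ContDiff ℝ (⊤ : ℕ∞) (Function.uncurry F)) (y s : ℝ) :
    pd2 F y s = fderiv ℝ (Function.uncurry F) (y, s) (0, 1) := by
  have h1 : HasFDerivAt (fun v : ℝ => (y, v))
      ((0 : ℝ →L[ℝ] ℝ).prod (ContinuousLinearMap.id ℝ ℝ)) s :=
    (hasFDerivAt_const y s).prodMk (hasFDerivAt_id s)
  have h2 := ((hF.differentiable (by simp) (y, s)).hasFDerivAt).comp s h1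
  have h3 := h2.hasDerivAt.deriv
  simp at h3
  exact h3

theorem contDiff_pd1 (hF : ContDiff ℝ (⊤ : ℕ∞) (Function.uncurry F)) :
    ContDiff ℝ (⊤ : ℕ∞) (Function.uncurry (pd1 F)) := by
  have h : ContDiff ℝ (⊤ : ℕ∞) (fderiv ℝ (Function.uncurry F)) := hF.fderiv_right (by simp)
  have h2 : ContDiff ℝ (⊤ : ℕ∞) (fun p : ℝ × ℝ => fderiv ℝ (Function.uncurry F) p (1, 0)) :=
    h.clm_apply contDiff_const
  convert h2 using 1
  funext p
  obtain ⟨y, s⟩ := p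
  exact pd1_eq_fderiv hF y s

theorem contDiff_pd2 (hF : ContDiff ℝ (⊤ : ℕ∞) (Function.uncurry F)) :
    ContDiff ℝ (⊤ : ℕ∞) (Function.uncurry (pd2 F)) := by
  have h : ContDiff ℝ (⊤ : ℕ∞) (fderiv ℝ (Function.uncurry F)) := hF.fderiv_right (by simp)
  have h2 : ContDiff ℝ (⊤ : ℕ∞) (fun p : ℝ × ℝ => fderiv ℝ (Function.uncurry F) p (0, 1)) :=
    h.clm_apply contDiff_const
  convert h2 using 1
  funext p
  obtain ⟨y, s⟩ := p
  exact pd2_eq_fderiv hF y s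

theorem pd_comm (hF : ContDiff ℝ (⊤ : ℕ∞) (Function.uncurry F)) (y s : ℝ) :
    pd1 (pd2 F) y s = pd2 (pd1 F) y s := by
  set G := fderiv ℝ (Function.uncurry F) with hGdef
  have hG : ContDiff ℝ (⊤ : ℕ∞) G := hF.fderiv_right (by simp)
  have hGd : DifferentiableAt ℝ G (y, s) := hG.differentiable (by simp) (y, s)
  have key : ∀ v w : ℝ × ℝ, fderiv ℝ G (y, s) v w = fderiv ℝ G (y, s) w v :=
    second_derivative_symmetric (fun p => (hF.differentiable (by simp) p).hasFDerivAt)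
      hGd.hasFDerivAt
  have e2 : pd1 (pd2 F) y s = fderiv ℝ G (y, s) (1, 0) (0, 1) := by
    have hsm : ContDiff ℝ (⊤ : ℕ∞) (Function.uncurry (fun a b : ℝ => G (a, b) (0, 1))) := by
      have := hG.clm_apply (contDiff_const (c := ((0 : ℝ), (1 : ℝ))))
      exact this
    have hpe : pd2 F = fun a b => G (a, b) (0, 1) := by
      funext a b; exact pd2_eq_fderiv hF a b
    rw [hpe]
    rw [pd1_eq_fderiv hsm y s]
    have heta : Function.uncurry (fun a b : ℝ => G (a, b) (0, 1))
        = fun p : ℝ × ℝ => G p (0, 1) := rfl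
    rw [heta]
    have hcomp : HasFDerivAt (fun p : ℝ × ℝ => G p (0, 1))
        ((ContinuousLinearMap.apply ℝ E ((0 : ℝ), (1 : ℝ))).comp (fderiv ℝ G (y, s))) (y, s) :=
      ((ContinuousLinearMap.apply ℝ E ((0 : ℝ), (1 : ℝ))).hasFDerivAt).comp (y, s)
        hGd.hasFDerivAt
    rw [hcomp.fderiv]
    rfl
  have e1 : pd2 (pd1 F) y s = fderiv ℝ G (y, s) (0, 1) (1, 0) := by
    have hsm : ContDiff ℝ (⊤ : ℕ∞) (Function.uncurry (fun a b : ℝ => G (a, b) (1, 0))) := by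
      have := hG.clm_apply (contDiff_const (c := ((1 : ℝ), (0 : ℝ))))
      exact this
    have hpe : pd1 F = fun a b => G (a, b) (1, 0) := by
      funext a b; exact pd1_eq_fderiv hF a b
    rw [hpe]
    rw [pd2_eq_fderiv hsm y s]
    have heta : Function.uncurry (fun a b : ℝ => G (a, b) (1, 0))
        = fun p : ℝ × ℝ => G p (1, 0) := rfl
    rw [heta]
    have hcomp : HasFDerivAt (fun p : ℝ × ℝ => G p (1, 0))
        ((ContinuousLinearMap.apply ℝ E ((1 : ℝ), (0 : ℝ))).comp (fderiv ℝ G (y, s))) (y, s) :=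
      ((ContinuousLinearMap.apply ℝ E ((1 : ℝ), (0 : ℝ))).hasFDerivAt).comp (y, s)
        hGd.hasFDerivAt
    rw [hcomp.fderiv]
    rfl
  rw [e1, e2, key]

end aux

theorem Real.hasDerivAt_tanh (x : ℝ) :
    HasDerivAt Real.tanh (1 / Real.cosh x ^ 2) x := by
  have h := (Real.hasDerivAt_sinh x).div (Real.hasDerivAt_cosh x)
    (ne_of_gt (Real.cosh_pos x))
  have e : (Real.cosh x * Real.cosh x - Real.sinh x * Real.sinh x) / Real.cosh x ^ 2
      = 1 / Real.cosh x ^ 2 := by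
    rw [← sq, ← sq, Real.cosh_sq]
    ring
  rw [e] at h
  have ht : Real.tanh = Real.sinh / Real.cosh := by
    funext z
    exact (Real.tanh_eq_sinh_div_cosh z)
  rw [ht]
  exact h


section main
variable {θ ω : ℝ → ℝ → ℝ}

theorem qfun_hasDerivAt2 (hθ : ContDiff ℝ (⊤ : ℕ∞) (Function.uncurry θ))
    (hω : ContDiff ℝ (⊤ : ℕ∞) (Function.uncurry ω)) (y s : ℝ) :
    HasDerivAt (fun v => qfun θ ω y v)
      ((Complex.ofReal (pd2 (pd1 θ) y s - pd1 ω y s * pd2 ω y s * Real.tanh (θ y s))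
        - Complex.I * Complex.ofReal (pd2 (pd1 ω) y s * Real.tanh (θ y s)
            + pd1 ω y s * pd2 θ y s / Real.cosh (θ y s) ^ 2
            + pd1 θ y s * pd2 ω y s))
        * Complex.exp (-(Complex.I) * (ω y s : ℂ))) s := by
  have hA := (aux_hd2 (contDiff_pd1 hθ) y s).ofReal_comp
  have hB := (aux_hd2 (contDiff_pd1 hω) y s).ofReal_comp
  have ht := aux_hd2 hθ y s
  have hw := aux_hd2 hω y s
  have hT : HasDerivAt (fun v => Real.tanh (θ y v))
      (1 / Real.cosh (θ y s) ^ 2 * pd2 θ y s) s :=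
    (Real.hasDerivAt_tanh (θ y s)).comp s ht
  have hTc := hT.ofReal_comp
  have hf := hA.sub ((hB.const_mul Complex.I).mul hTc)
  have hinner : HasDerivAt (fun v => -(Complex.I) * (ω y v : ℂ))
      (-(Complex.I) * Complex.ofReal (pd2 ω y s)) s :=
    (hw.ofReal_comp).const_mul (-(Complex.I))
  have hexp := hinner.cexp
  have hq := hf.mul hexp
  have hDeq :
      (Complex.ofReal (pd2 (pd1 θ) y s - pd1 ω y s * pd2 ω y s * Real.tanh (θ y s))
        - Complex.I * Complex.ofReal (pd2 (pd1 ω) y s * Real.tanh (θ y s)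
            + pd1 ω y s * pd2 θ y s / Real.cosh (θ y s) ^ 2
            + pd1 θ y s * pd2 ω y s))
        * Complex.exp (-(Complex.I) * (ω y s : ℂ))
      = (Complex.ofReal (pd2 (pd1 θ) y s)
            - (Complex.I * Complex.ofReal (pd2 (pd1 ω) y s)
                * Complex.ofReal (Real.tanh (θ y s))
              + Complex.I * Complex.ofReal (pd1 ω y s)
                * Complex.ofReal (1 / Real.cosh (θ y s) ^ 2 * pd2 θ y s)))
          * Complex.exp (-(Complex.I) * (ω y s : ℂ))
        + (Complex.ofReal (pd1 θ y s)
            - Complex.I * Complex.ofReal (pd1 ω y s) * Complex.ofReal (Real.tanh (θ y s)))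
          * (Complex.exp (-(Complex.I) * (ω y s : ℂ))
              * (-(Complex.I) * Complex.ofReal (pd2 ω y s))) := by
    simp only [Complex.ofReal_sub, Complex.ofReal_add, Complex.ofReal_mul,
      Complex.ofReal_div, Complex.ofReal_pow, Complex.ofReal_one]
    linear_combination (-(Complex.exp (-(Complex.I) * (ω y s : ℂ))
      * Complex.ofReal (pd1 ω y s) * Complex.ofReal (Real.tanh (θ y s))
      * Complex.ofReal (pd2 ω y s))) * Complex.I_sq
  rw [hDeq]
  exact hq

theorem pd2_qfun_eq (hθ : ContDiff ℝ (⊤ : ℕ∞) (Function.uncurry θ))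
    (hω : ContDiff ℝ (⊤ : ℕ∞) (Function.uncurry ω)) (y s : ℝ) :
    pd2 (qfun θ ω) y s =
      (Complex.ofReal (pd2 (pd1 θ) y s - pd1 ω y s * pd2 ω y s * Real.tanh (θ y s))
        - Complex.I * Complex.ofReal (pd2 (pd1 ω) y s * Real.tanh (θ y s)
            + pd1 ω y s * pd2 θ y s / Real.cosh (θ y s) ^ 2
            + pd1 θ y s * pd2 ω y s))
        * Complex.exp (-(Complex.I) * (ω y s : ℂ)) :=
  (qfun_hasDerivAt2 hθ hω y s).deriv

theorem complex_iff_real (hθ : ContDiff ℝ (⊤ : ℕ∞) (Function.uncurry θ))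
    (hω : ContDiff ℝ (⊤ : ℕ∞) (Function.uncurry ω)) (y s : ℝ) :
    pd2 (qfun θ ω) y s
        = (Real.sinh (θ y s) : ℂ) * Complex.exp (-(Complex.I) * (ω y s : ℂ))
      ↔ (pd2 (pd1 θ) y s
            = Real.sinh (θ y s) + Real.tanh (θ y s) * pd1 ω y s * pd2 ω y s
          ∧ pd2 (pd1 ω) y s * Real.tanh (θ y s)
              + pd1 ω y s * pd2 θ y s / Real.cosh (θ y s) ^ 2
              + pd1 θ y s * pd2 ω y s = 0) := by
  rw [pd2_qfun_eq hθ hω y s,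
    mul_left_inj' (Complex.exp_ne_zero (-(Complex.I) * (ω y s : ℂ)))]
  rw [Complex.ext_iff]
  simp only [Complex.sub_re, Complex.ofReal_re, Complex.mul_re, Complex.I_re,
    Complex.ofReal_im, Complex.I_im, Complex.sub_im, Complex.mul_im]
  constructor
  · rintro ⟨h1, h2⟩
    exact ⟨by linarith, by linarith⟩
  · rintro ⟨h1, h2⟩
    exact ⟨by linarith, by linarith⟩

end main

section main2
variable {θ ω : ℝ → ℝ → ℝ}

theorem mc_left (hθ : ContDiff ℝ (⊤ : ℕ∞) (Function.uncurry θ))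
    (hω : ContDiff ℝ (⊤ : ℕ∞) (Function.uncurry ω)) (y s : ℝ) :
    pd1 (fun u v => pd2 ω u v * Real.cosh (θ u v)) y s
      = pd1 (pd2 ω) y s * Real.cosh (θ y s)
        + pd2 ω y s * (Real.sinh (θ y s) * pd1 θ y s) := by
  have h1 := aux_hd1 (contDiff_pd2 hω) y s
  have h2 : HasDerivAt (fun u => Real.cosh (θ u s)) (Real.sinh (θ y s) * pd1 θ y s) y :=
    by have := (Real.hasDerivAt_cosh (θ y s)).comp y (aux_hd1 hθ y s); exact this
  exact (h1.mul h2).deriv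

theorem mc_right (hθ : ContDiff ℝ (⊤ : ℕ∞) (Function.uncurry θ))
    (hω : ContDiff ℝ (⊤ : ℕ∞) (Function.uncurry ω)) (y s : ℝ) (hc : Real.cosh (θ y s) ≠ 0) :
    pd2 (fun u v => pd1 ω u v / Real.cosh (θ u v)) y s
      = (pd2 (pd1 ω) y s * Real.cosh (θ y s)
          - pd1 ω y s * (Real.sinh (θ y s) * pd2 θ y s)) / Real.cosh (θ y s) ^ 2 := by
  have h1 := aux_hd2 (contDiff_pd1 hω) y s
  have h2 : HasDerivAt (fun v => Real.cosh (θ y v)) (Real.sinh (θ y s) * pd2 θ y s) s :=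
    (Real.hasDerivAt_cosh (θ y s)).comp s (aux_hd2 hθ y s)
  exact (h1.div h2 hc).deriv

theorem surface_iff (hθ : ContDiff ℝ (⊤ : ℕ∞) (Function.uncurry θ))
    (hω : ContDiff ℝ (⊤ : ℕ∞) (Function.uncurry ω))
    (hcosh : ∀ y s : ℝ, 0 < Real.cosh (θ y s))
    (hsinh : ∀ y s : ℝ, Real.sinh (θ y s) ≠ 0) (y s : ℝ) :
    (pd2 (pd1 θ) y s = Real.sinh (θ y s) + Real.tanh (θ y s) * pd1 ω y s * pd2 ω y s
        ∧ pd1 (fun u v => pd2 ω u v * Real.cosh (θ u v)) y s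
            = pd2 (fun u v => pd1 ω u v / Real.cosh (θ u v)) y s)
      ↔ pd2 (qfun θ ω) y s
          = (Real.sinh (θ y s) : ℂ) * Complex.exp (-(Complex.I) * (ω y s : ℂ)) := by
  have hC : Real.cosh (θ y s) ≠ 0 := (hcosh y s).ne'
  have hS : Real.sinh (θ y s) ≠ 0 := hsinh y s
  have hsq : Real.cosh (θ y s) ^ 2 = 1 + Real.sinh (θ y s) ^ 2 := Real.cosh_sq' (θ y s)
  rw [complex_iff_real hθ hω y s, mc_left hθ hω y s, mc_right hθ hω y s hC,
    pd_comm hω y s]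
  refine and_congr Iff.rfl ?_
  rw [Real.tanh_eq_sinh_div_cosh]
  constructor
  · intro h
    field_simp at h ⊢
    have key : Real.sinh (θ y s) *
        (pd2 (pd1 ω) y s * Real.sinh (θ y s) * Real.cosh (θ y s) ^ 2
          + pd1 ω y s * pd2 θ y s * Real.cosh (θ y s)
          + pd1 θ y s * pd2 ω y s * (Real.cosh (θ y s) * Real.cosh (θ y s) ^ 2)) = 0 := by
      linear_combination Real.cosh (θ y s) * h
        - pd2 (pd1 ω) y s * Real.cosh (θ y s) ^ 2 * hsq
    have k2 := (mul_eq_zero.mp key).resolve_left hS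
    have k3 : Real.cosh (θ y s) * (pd2 (pd1 ω) y s * Real.cosh (θ y s) * Real.sinh (θ y s)
        + pd1 ω y s * pd2 θ y s + Real.cosh (θ y s) ^ 2 * pd2 ω y s * pd1 θ y s) = 0 := by
      linear_combination k2
    rw [mul_zero]
    exact (mul_eq_zero.mp k3).resolve_left hC
  · intro h
    field_simp at h ⊢
    have key : Real.cosh (θ y s) *
        ((pd2 (pd1 ω) y s * Real.cosh (θ y s)
            + pd2 ω y s * (Real.sinh (θ y s) * pd1 θ y s)) * Real.cosh (θ y s) ^ 2
          - (pd2 (pd1 ω) y s * Real.cosh (θ y s)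
              - pd1 ω y s * (Real.sinh (θ y s) * pd2 θ y s))) = 0 := by
      linear_combination Real.sinh (θ y s) * Real.cosh (θ y s) * h
        + pd2 (pd1 ω) y s * Real.cosh (θ y s) ^ 2 * hsq
    have h2 := (mul_eq_zero.mp key).resolve_left hC
    linarith [h2]

theorem qfun_normSq (θ ω : ℝ → ℝ → ℝ) (u v : ℝ) :
    ‖qfun θ ω u v‖ ^ 2 = pd1 θ u v ^ 2 + (pd1 ω u v * Real.tanh (θ u v)) ^ 2 := by
  rw [qfun, norm_mul]
  have h1 : ‖Complex.exp (-(Complex.I) * (ω u v : ℂ))‖ = 1 := by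
    rw [Complex.norm_exp]
    simp
  rw [h1, mul_one, Complex.sq_norm, Complex.normSq_apply]
  simp only [Complex.sub_re, Complex.sub_im, Complex.mul_re, Complex.mul_im,
    Complex.I_re, Complex.I_im, Complex.ofReal_re, Complex.ofReal_im]
  ring

end main2

section main3
variable {θ ω : ℝ → ℝ → ℝ}

theorem ccd_first (hθ : ContDiff ℝ (⊤ : ℕ∞) (Function.uncurry θ))
    (hω : ContDiff ℝ (⊤ : ℕ∞) (Function.uncurry ω))
    (hcosh : ∀ y s : ℝ, 0 < Real.cosh (θ y s))
    (H : ∀ y s : ℝ, pd2 (qfun θ ω) y s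
        = (Real.sinh (θ y s) : ℂ) * Complex.exp (-(Complex.I) * (ω y s : ℂ)))
    (y s : ℝ) :
    pd1 (pd2 (qfun θ ω)) y s = (Real.cosh (θ y s) : ℂ) * qfun θ ω y s := by
  have hS : HasDerivAt (fun u => ((Real.sinh (θ u s) : ℝ) : ℂ))
      (Complex.ofReal (Real.cosh (θ y s) * pd1 θ y s)) y :=
    by have := (Real.hasDerivAt_sinh (θ y s)).comp y (aux_hd1 hθ y s); exact this.ofReal_comp
  have hE : HasDerivAt (fun u => Complex.exp (-(Complex.I) * (ω u s : ℂ)))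
      (Complex.exp (-(Complex.I) * (ω y s : ℂ))
        * (-(Complex.I) * Complex.ofReal (pd1 ω y s))) y :=
    (((aux_hd1 hω y s).ofReal_comp).const_mul (-(Complex.I))).cexp
  have h := (hS.mul hE).deriv
  have h0 : pd1 (pd2 (qfun θ ω)) y s
      = Complex.ofReal (Real.cosh (θ y s) * pd1 θ y s)
          * Complex.exp (-(Complex.I) * (ω y s : ℂ))
        + ((Real.sinh (θ y s) : ℝ) : ℂ)
          * (Complex.exp (-(Complex.I) * (ω y s : ℂ))
              * (-(Complex.I) * Complex.ofReal (pd1 ω y s))) := by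
    show deriv (fun u => pd2 (qfun θ ω) u s) y = _
    have hfun : (fun u => pd2 (qfun θ ω) u s)
        = fun u => (Real.sinh (θ u s) : ℂ)
            * Complex.exp (-(Complex.I) * (ω u s : ℂ)) :=
      funext fun u => H u s
    rw [hfun]
    exact h
  rw [h0, qfun, Real.tanh_eq_sinh_div_cosh, Complex.ofReal_div, Complex.ofReal_mul]
  have hC : ((Real.cosh (θ y s) : ℝ) : ℂ) ≠ 0 := by
    exact_mod_cast (hcosh y s).ne'
  have hCC : ((Real.cosh (θ y s) : ℝ) : ℂ) * ((Real.cosh (θ y s) : ℝ) : ℂ)⁻¹ = 1 :=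
    mul_inv_cancel₀ hC
  linear_combination (Complex.I * Complex.ofReal (pd1 ω y s)
    * Complex.ofReal (Real.sinh (θ y s))
    * Complex.exp (-(Complex.I) * (ω y s : ℂ))) * hCC

theorem ccd_second (hθ : ContDiff ℝ (⊤ : ℕ∞) (Function.uncurry θ))
    (hω : ContDiff ℝ (⊤ : ℕ∞) (Function.uncurry ω))
    (hcosh : ∀ y s : ℝ, 0 < Real.cosh (θ y s))
    (h1 : pd2 (pd1 θ) y s
        = Real.sinh (θ y s) + Real.tanh (θ y s) * pd1 ω y s * pd2 ω y s)
    (h2 : pd2 (pd1 ω) y s * Real.tanh (θ y s)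
        + pd1 ω y s * pd2 θ y s / Real.cosh (θ y s) ^ 2
        + pd1 θ y s * pd2 ω y s = 0) :
    pd1 (fun u v => Real.cosh (θ u v)) y s
      - (1 / 2) * pd2 (fun u v => ‖qfun θ ω u v‖ ^ 2) y s = 0 := by
  have hcoshd : pd1 (fun u v => Real.cosh (θ u v)) y s
      = Real.sinh (θ y s) * pd1 θ y s :=
    by have := (Real.hasDerivAt_cosh (θ y s)).comp y (aux_hd1 hθ y s); exact this.deriv
  have hA := aux_hd2 (contDiff_pd1 hθ) y s
  have hB := aux_hd2 (contDiff_pd1 hω) y s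
  have hT : HasDerivAt (fun v => Real.tanh (θ y v))
      (1 / Real.cosh (θ y s) ^ 2 * pd2 θ y s) s :=
    (Real.hasDerivAt_tanh (θ y s)).comp s (aux_hd2 hθ y s)
  have hD := (show HasDerivAt (fun v => pd1 θ y v ^ 2 + (pd1 ω y v * Real.tanh (θ y v)) ^ 2) _ s
    from (hA.pow 2).add ((hB.mul hT).pow 2)).deriv
  have h0 : pd2 (fun u v => ‖qfun θ ω u v‖ ^ 2) y s
      = deriv (fun v => pd1 θ y v ^ 2 + (pd1 ω y v * Real.tanh (θ y v)) ^ 2) s := by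
    show deriv (fun v => ‖qfun θ ω y v‖ ^ 2) s = _
    congr 1
    funext v
    exact qfun_normSq θ ω y v
  rw [hcoshd, h0, hD, Pi.mul_apply]
  push_cast
  linear_combination (-(pd1 θ y s)) * h1
    - (pd1 ω y s * Real.tanh (θ y s)) * h2

end main3

/-- with `q = (θ_y − i ω_y tanh θ)e^{-iω}` and `ρ = cosh θ`, the Theorema egregium
`θ_{ys} = sinh θ + (tanh θ) ω_y ω_s` together with the Mainardi–Codazzi equation
`(ω_s cosh θ)_y = (ω_y / cosh θ)_s` holds identically iff `q_s = sinh θ · e^{-iω}` holds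
identically; and in that case `(q, ρ)` satisfies the defocusing CCD system. -/
theorem defocusing_ccd_from_surface (θ ω : ℝ → ℝ → ℝ)
    (hθ : ContDiff ℝ (⊤ : ℕ∞) (Function.uncurry θ)) (hω : ContDiff ℝ (⊤ : ℕ∞) (Function.uncurry ω))
    (hcosh : ∀ y s : ℝ, 0 < Real.cosh (θ y s)) (hsinh : ∀ y s : ℝ, Real.sinh (θ y s) ≠ 0) :
    ((∀ y s : ℝ,
        pd2 (pd1 θ) y s = Real.sinh (θ y s) + Real.tanh (θ y s) * pd1 ω y s * pd2 ω y s
          ∧ pd1 (fun u v => pd2 ω u v * Real.cosh (θ u v)) y s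
              = pd2 (fun u v => pd1 ω u v / Real.cosh (θ u v)) y s)
      ↔ (∀ y s : ℝ,
          pd2 (qfun θ ω) y s
            = (Real.sinh (θ y s) : ℂ) * Complex.exp (-(Complex.I) * (ω y s : ℂ))))
    ∧ ((∀ y s : ℝ,
          pd2 (qfun θ ω) y s
            = (Real.sinh (θ y s) : ℂ) * Complex.exp (-(Complex.I) * (ω y s : ℂ))) →
        (∀ y s : ℝ,
          pd1 (pd2 (qfun θ ω)) y s = (Real.cosh (θ y s) : ℂ) * qfun θ ω y s
            ∧ pd1 (fun u v => Real.cosh (θ u v)) y s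
                - (1 / 2) * pd2 (fun u v => ‖qfun θ ω u v‖ ^ 2) y s = 0)) := by
  constructor
  · exact forall_congr' fun y => forall_congr' fun s => surface_iff hθ hω hcosh hsinh y s
  · intro H y s
    have hre := (complex_iff_real hθ hω y s).mp (H y s)
    exact ⟨ccd_first hθ hω hcosh H y s, ccd_second hθ hω hcosh hre.1 hre.2⟩
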